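/- Let A be a bounded linear operator on H. Then for every real number r ≥ 1 and every α ∈ [0,1], ber(A)^{2r} ≤ (α/2)·ber(A²)^r + ber((α/4)·|A|^{2r} + (1 − 3α/4)·|A*|^{2r}). -/

import Mathlib

set_option synthInstance.maxHeartbeats 1000000
set_option maxHeartbeats 1000000

open scoped NNReal
open ContinuousLinearMap

/-- The Berezin number of an operator `T`, relative to the family `k` of
(normalized reproducing kernel) vectors indexed by `Ω`. -/
noncomputable def ber {H : Type*} [NormedAddCommGroup H] [InnerProductSpace ℂ H]
    {Ω : Type*} (k : Ω → H) (T : H →L[ℂ] H) : ℝ :=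
  ⨆ lam : Ω, ‖(inner ℂ (T (k lam)) (k lam) : ℂ)‖

/-- The absolute value `|T| = (T*T)^(1/2)` of a bounded operator. -/
noncomputable def opAbs {H : Type*} [NormedAddCommGroup H] [InnerProductSpace ℂ H]
    [CompleteSpace H] (T : H →L[ℂ] H) : H →L[ℂ] H :=
  CFC.sqrt (adjoint T * T)

/-!
Fix a unit vector `x`. Buzano's inequality with `e = x`, `a = A x`, `b = A* x` gives
`|⟪A x, x⟫|² ≤ (‖A x‖ ‖A* x‖ + |⟪A² x, x⟫|) / 2`, and Cauchy–Schwarz gives `|⟪A x, x⟫| ≤ ‖A* x‖`.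
Averaging the two with weights `α`, `1 - α` and using `‖A x‖ ‖A* x‖ ≤ (‖A x‖² + ‖A* x‖²) / 2`
bounds `|⟪A x, x⟫|²` by a convex combination of `|⟪A² x, x⟫|`, `‖A x‖²` and `‖A* x‖²`.
Convexity of `t ↦ t ^ r` moves the power `r` inside, and McCarthy's inequality
`⟪P x, x⟫ ^ r ≤ ⟪P ^ r x, x⟫` for `P = A* A`, `A A*` (whose `r`-th powers are `|A| ^ (2r)`,
`|A*| ^ (2r)`) turns `‖A x‖ ^ (2r)`, `‖A* x‖ ^ (2r)` into the quadratic forms of those operators.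
Taking `x = k̂_λ` and the supremum over `λ` gives the theorem.
-/

open scoped InnerProductSpace
open RCLike

theorem Real.rpow_tangent_le {l t p : ℝ} (hl : 0 < l) (ht : 0 ≤ t) (hp : 1 ≤ p) :
    l ^ p + p * l ^ (p - 1) * (t - l) ≤ t ^ p := by
  have hbern := one_add_mul_self_le_rpow_one_add (s := t / l - 1) (by
    have := div_nonneg ht hl.le; linarith) hp
  rw [add_sub_cancel, Real.div_rpow ht hl.le, le_div_iff₀ (by positivity)] at hbern
  have hl1 : l ^ (p - 1) * l = l ^ p := by
    rw [← Real.rpow_add_one hl.ne']; ring_nf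
  calc l ^ p + p * l ^ (p - 1) * (t - l) = (1 + p * (t / l - 1)) * l ^ p := by
        rw [← hl1]; field_simp
    _ ≤ t ^ p := hbern

theorem Real.rpow_weighted_sum_three_le {w₁ w₂ w₃ z₁ z₂ z₃ p : ℝ} (hw₁ : 0 ≤ w₁) (hw₂ : 0 ≤ w₂)
    (hw₃ : 0 ≤ w₃) (hw : w₁ + w₂ + w₃ = 1) (hz₁ : 0 ≤ z₁) (hz₂ : 0 ≤ z₂) (hz₃ : 0 ≤ z₃)
    (hp : 1 ≤ p) :
    (w₁ * z₁ + w₂ * z₂ + w₃ * z₃) ^ p ≤ w₁ * z₁ ^ p + w₂ * z₂ ^ p + w₃ * z₃ ^ p := by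
  simpa [Fin.sum_univ_three] using Real.rpow_arith_mean_le_arith_mean_rpow Finset.univ
    ![w₁, w₂, w₃] ![z₁, z₂, z₃] (by simp [Fin.forall_fin_succ, *]) (by simp [Fin.sum_univ_three, hw])
    (by simp [Fin.forall_fin_succ, *]) hp

section InnerProductSpace

variable {𝕜 E : Type*} [RCLike 𝕜] [NormedAddCommGroup E] [InnerProductSpace 𝕜 E]

theorem norm_inner_mul_inner_le (a b e : E) (he : ‖e‖ = 1) :
    ‖⟪a, e⟫_𝕜 * ⟪e, b⟫_𝕜‖ ≤ (‖a‖ * ‖b‖ + ‖⟪a, b⟫_𝕜‖) / 2 := by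
  set K := 𝕜 ∙ e
  have hrefl : ⟪K.reflection a, b⟫_𝕜 = 2 * (⟪a, e⟫_𝕜 * ⟪e, b⟫_𝕜) - ⟪a, b⟫_𝕜 := by
    simp only [K, Submodule.reflection_singleton_apply, he, inner_sub_left, two_smul,
      inner_add_left, inner_smul_left, map_one, one_pow, div_one, inner_conj_symm]
    ring
  -- the reflection in `𝕜 ∙ e` is an isometry, so Cauchy–Schwarz bounds its pairing with `b`
  have hcs : ‖⟪K.reflection a, b⟫_𝕜‖ ≤ ‖a‖ * ‖b‖ := by
    simpa using norm_inner_le_norm (𝕜 := 𝕜) (K.reflection a) b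
  have := norm_sub_norm_le (2 * (⟪a, e⟫_𝕜 * ⟪e, b⟫_𝕜)) ⟪a, b⟫_𝕜
  rw [norm_mul, RCLike.norm_two, ← hrefl] at this
  linarith

theorem ContinuousLinearMap.re_inner_le_re_inner_of_le {S T : E →L[𝕜] E} (h : S ≤ T) (x : E) :
    re ⟪S x, x⟫_𝕜 ≤ re ⟪T x, x⟫_𝕜 := by
  simpa [inner_sub_left] using ((le_def S T).mp h).re_inner_nonneg_left x

end InnerProductSpace

theorem CFC.rpow_tangent_le {A : Type*} [CStarAlgebra A] [PartialOrder A] [StarOrderedRing A]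
    {a : A} (ha : 0 ≤ a) {l p : ℝ} (hl : 0 < l) (hp : 1 ≤ p) :
    (p * l ^ (p - 1)) • a + algebraMap ℝ A (l ^ p - p * l ^ (p - 1) * l) ≤ a ^ p := by
  have hmono : cfc (fun t : ℝ => p * l ^ (p - 1) * t + (l ^ p - p * l ^ (p - 1) * l)) a ≤
      cfc (fun t : ℝ => t ^ p) a := by
    refine cfc_mono (fun t ht => ?_)
      (hg := (Real.continuous_rpow_const (by linarith)).continuousOn)
    have := Real.rpow_tangent_le hl (spectrum_nonneg_of_nonneg ha ht) hp
    linarith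
  rwa [cfc_add_const _ _ a, cfc_const_mul_id _ a, ← CFC.rpow_eq_cfc_real] at hmono

section Hilbert

variable {H : Type*} [NormedAddCommGroup H] [InnerProductSpace ℂ H] {Ω : Type*}

theorem norm_inner_le_ber {k : Ω → H} (hk : ∀ lam, ‖k lam‖ = 1) (T : H →L[ℂ] H) (lam : Ω) :
    ‖⟪T (k lam), k lam⟫_ℂ‖ ≤ ber k T := by
  refine le_ciSup (f := fun μ => ‖⟪T (k μ), k μ⟫_ℂ‖) ⟨‖T‖, ?_⟩ lam
  rintro _ ⟨μ, rfl⟩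
  exact (norm_inner_le_norm _ _).trans (by simpa [hk] using T.le_opNorm (k μ))

theorem ber_nonneg (k : Ω → H) (T : H →L[ℂ] H) : 0 ≤ ber k T :=
  Real.iSup_nonneg fun _ => norm_nonneg _

theorem ber_rpow_le [Nonempty Ω] {k : Ω → H} {T : H →L[ℂ] H} {p C : ℝ} (hp : 0 < p)
    (h : ∀ lam, ‖⟪T (k lam), k lam⟫_ℂ‖ ^ p ≤ C) : ber k T ^ p ≤ C := by
  have hC : 0 ≤ C := (Real.rpow_nonneg (norm_nonneg _) p).trans (h (Classical.arbitrary Ω))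
  have hber : ber k T ≤ C ^ p⁻¹ :=
    ciSup_le fun lam => (Real.le_rpow_inv_iff_of_pos (norm_nonneg _) hC hp).2 (h lam)
  calc ber k T ^ p ≤ (C ^ p⁻¹) ^ p := by gcongr; exact ber_nonneg k T
    _ = C := Real.rpow_inv_rpow hC hp.ne'

variable [CompleteSpace H]

theorem rpow_re_inner_le_re_inner_rpow {P : H →L[ℂ] H} (hP : 0 ≤ P) {x : H} (hx : ‖x‖ = 1)
    {p : ℝ} (hp : 1 ≤ p) : re ⟪P x, x⟫_ℂ ^ p ≤ re ⟪(P ^ p) x, x⟫_ℂ := by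
  set φ := re ⟪P x, x⟫_ℂ
  have hφ : 0 ≤ φ := ((nonneg_iff_isPositive P).mp hP).re_inner_nonneg_left x
  rcases hφ.eq_or_lt with hφ0 | hφpos
  · rw [← hφ0, Real.zero_rpow (by linarith)]
    exact ((nonneg_iff_isPositive _).mp CFC.rpow_nonneg).re_inner_nonneg_left x
  -- McCarthy's inequality: evaluate the tangent of `t ↦ t ^ p` at `φ` in the functional calculus
  have htangent := re_inner_le_re_inner_of_le (CFC.rpow_tangent_le hP hφpos hp) x
  simp only [Algebra.algebraMap_eq_smul_one, add_apply, smul_apply, one_apply_eq_self,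
    inner_add_left, inner_smul_left_eq_smul, map_add, RCLike.smul_re, inner_self_eq_norm_sq, hx,
    one_pow, mul_one] at htangent
  linarith

theorem rpow_opAbs_two_mul (T : H →L[ℂ] H) {p : ℝ} (hp : 0 ≤ p) :
    CFC.rpow (opAbs T) (2 * p) = (adjoint T * T) ^ p := by
  have hTT : 0 ≤ adjoint T * T := star_mul_self_nonneg T
  change CFC.sqrt (adjoint T * T) ^ (2 * p) = _
  rw [CFC.sqrt_eq_rpow, CFC.rpow_rpow_of_exponent_nonneg _ _ _ (by norm_num) (by positivity) hTT]
  ring_nf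

theorem norm_sq_rpow_le_re_inner_rpow_opAbs (T : H →L[ℂ] H) {x : H} (hx : ‖x‖ = 1) {p : ℝ}
    (hp : 1 ≤ p) : (‖T x‖ ^ 2) ^ p ≤ re ⟪CFC.rpow (opAbs T) (2 * p) x, x⟫_ℂ := by
  have hTT : 0 ≤ adjoint T * T := star_mul_self_nonneg T
  have hquad : re ⟪(adjoint T * T) x, x⟫_ℂ = ‖T x‖ ^ 2 := by
    change re ⟪adjoint T (T x), x⟫_ℂ = _
    rw [adjoint_inner_left, inner_self_eq_norm_sq]
  rw [rpow_opAbs_two_mul T (by linarith), ← hquad]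
  exact rpow_re_inner_le_re_inner_rpow hTT hx hp

theorem norm_inner_rpow_le (A : H →L[ℂ] H) {x : H} (hx : ‖x‖ = 1) {r : ℝ} (hr : 1 ≤ r)
    {α : ℝ} (hα₀ : 0 ≤ α) (hα₁ : α ≤ 1) :
    ‖⟪A x, x⟫_ℂ‖ ^ (2 * r) ≤ α / 2 * ‖⟪(A * A) x, x⟫_ℂ‖ ^ r
      + re ⟪((α / 4) • CFC.rpow (opAbs A) (2 * r)
          + (1 - 3 * α / 4) • CFC.rpow (opAbs (adjoint A)) (2 * r)) x, x⟫_ℂ := by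
  set a := ‖⟪A x, x⟫_ℂ‖
  set s := ‖⟪(A * A) x, x⟫_ℂ‖
  set u := ‖A x‖
  set v := ‖adjoint A x‖
  have ha : 0 ≤ a := norm_nonneg _
  have hbuzano : a ^ 2 ≤ (u * v + s) / 2 := by
    have := norm_inner_mul_inner_le (𝕜 := ℂ) (A x) (adjoint A x) x hx
    rwa [adjoint_inner_right, adjoint_inner_right, norm_mul, ← sq] at this
  have hav : a ≤ v := by
    simpa [a, hx, ← adjoint_inner_right] using norm_inner_le_norm (𝕜 := ℂ) x (adjoint A x)
  have hmix : a ^ 2 ≤ α / 2 * s + α / 4 * u ^ 2 + (1 - 3 * α / 4) * v ^ 2 := by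
    nlinarith [mul_le_mul_of_nonneg_left hbuzano hα₀, sq_nonneg (u - v),
      mul_le_mul_of_nonneg_left (pow_le_pow_left₀ ha hav 2) (sub_nonneg.2 hα₁)]
  calc a ^ (2 * r) = (a ^ 2) ^ r := by
        rw [← Real.rpow_natCast_mul ha]; norm_num
    _ ≤ (α / 2 * s + α / 4 * u ^ 2 + (1 - 3 * α / 4) * v ^ 2) ^ r := by gcongr
    _ ≤ α / 2 * s ^ r + α / 4 * (u ^ 2) ^ r + (1 - 3 * α / 4) * (v ^ 2) ^ r :=
        Real.rpow_weighted_sum_three_le (by positivity) (by positivity) (by linarith) (by ring)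
          (norm_nonneg _) (sq_nonneg _) (sq_nonneg _) hr
    _ ≤ α / 2 * s ^ r + α / 4 * re ⟪CFC.rpow (opAbs A) (2 * r) x, x⟫_ℂ
          + (1 - 3 * α / 4) * re ⟪CFC.rpow (opAbs (adjoint A)) (2 * r) x, x⟫_ℂ := by
        gcongr
        · exact norm_sq_rpow_le_re_inner_rpow_opAbs A hx hr
        · linarith
        · exact norm_sq_rpow_le_re_inner_rpow_opAbs (adjoint A) hx hr
    _ = _ := by
        simp only [add_apply, smul_apply, inner_add_left, inner_smul_left_eq_smul, map_add,
          RCLike.smul_re, add_assoc]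

end Hilbert

theorem berezin_power_inequality_with_square
    {H : Type*} [NormedAddCommGroup H] [InnerProductSpace ℂ H] [CompleteSpace H]
    {Ω : Type*} [Nonempty Ω] (k : Ω → H) (hk : ∀ lam, ‖k lam‖ = 1)
    (A : H →L[ℂ] H) (r : ℝ) (hr : 1 ≤ r) (α : ℝ) (hα : α ∈ Set.Icc (0 : ℝ) 1) :
    ber k A ^ (2 * r) ≤
      α / 2 * ber k (A * A) ^ r
        + ber k ((α / 4) • CFC.rpow (opAbs A) (2 * r)
            + (1 - 3 * α / 4) • CFC.rpow (opAbs (adjoint A)) (2 * r)) := by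
  obtain ⟨hα₀, hα₁⟩ := hα
  refine ber_rpow_le (by positivity) fun lam => (norm_inner_rpow_le A (hk lam) hr hα₀ hα₁).trans ?_
  gcongr
  · exact norm_inner_le_ber hk _ lam
  · exact (RCLike.re_le_norm _).trans (norm_inner_le_ber hk _ lam)
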